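/- Let S be a monoid with a right ideal R such that R = N × B, where N is a monoid and B is a right zero semigroup. Fix y ∈ B and let M = {(n, y) : n ∈ N}. Then M is a subsemigroup of S with two-sided identity e = (1, y), and if A is a free left ℤS-module of rank r, then eA is a free left ℤM-module of rank r·|B|. -/

import Mathlib

/-- The property `FP_n` for a left module `M` over a ring `R`: there is an exact sequence
`A_n → ⋯ → A_0 → M → 0` with each `A_i` a finitely generated free left `R`-module. -/
def ModuleFP (R : Type*) [Ring R] (M : Type*) [AddCommGroup M] [Module R M] (n : ℕ) : Prop :=
  ∃ (k : ℕ → ℕ) (d : ∀ i : ℕ, (Fin (k (i + 1)) → R) →ₗ[R] (Fin (k i) → R))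
    (ε : (Fin (k 0) → R) →ₗ[R] M),
    Function.Surjective ε ∧
    (0 < n → LinearMap.range (d 0) = LinearMap.ker ε) ∧
    ∀ i : ℕ, i + 1 < n → LinearMap.range (d (i + 1)) = LinearMap.ker (d i)

/-- `ℤ` as a left module over the monoid algebra `ℤS`, via the augmentation map
sending every element of `S` to `1`. -/
noncomputable def augModule (S : Type*) [Monoid S] : Module (MonoidAlgebra ℤ S) ℤ :=
  Module.compHom ℤ ((MonoidAlgebra.lift (R := ℤ) (A := ℤ) (M := S) 1).toRingHom)

/-- A monoid `S` is of type left-`FP_n`. -/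
def LeftFP (S : Type*) [Monoid S] (n : ℕ) : Prop :=
  letI := augModule S
  ModuleFP (MonoidAlgebra ℤ S) ℤ n

/-- A monoid `S` is of type right-`FP_n` (right `ℤS`-modules = left modules over `ℤ[Sᵐᵒᵖ]`). -/
def RightFP (S : Type*) [Monoid S] (n : ℕ) : Prop :=
  LeftFP Sᵐᵒᵖ n

/-- A semigroup is of type left-`FP_n` if the monoid `S¹ = S ∪ {1}` is. -/
def SgLeftFP (S : Type*) [Semigroup S] (n : ℕ) : Prop :=
  LeftFP (WithOne S) n

/-- A semigroup is of type right-`FP_n` if the monoid `S¹ = S ∪ {1}` is. -/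
def SgRightFP (S : Type*) [Semigroup S] (n : ℕ) : Prop :=
  RightFP (WithOne S) n

/-- A group is of type `FP_n` (for groups, left- and right-`FP_n` coincide). -/
def GroupFP (G : Type*) [Group G] (n : ℕ) : Prop :=
  LeftFP G n

/-- A left ideal of a semigroup: a nonempty subset closed under left multiplication. -/
def IsLeftIdeal {S : Type*} [Mul S] (L : Set S) : Prop :=
  L.Nonempty ∧ ∀ s : S, ∀ l ∈ L, s * l ∈ L

/-- A right ideal of a semigroup: a nonempty subset closed under right multiplication. -/
def IsRightIdeal {S : Type*} [Mul S] (R : Set S) : Prop :=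
  R.Nonempty ∧ ∀ r ∈ R, ∀ s : S, r * s ∈ R

/-- A two-sided ideal of a semigroup. -/
def IsIdeal {S : Type*} [Mul S] (I : Set S) : Prop :=
  I.Nonempty ∧ (∀ s : S, ∀ i ∈ I, s * i ∈ I) ∧ ∀ i ∈ I, ∀ s : S, i * s ∈ I

/-- A minimal left ideal. -/
def IsMinimalLeftIdeal {S : Type*} [Mul S] (L : Set S) : Prop :=
  IsLeftIdeal L ∧ ∀ L' : Set S, IsLeftIdeal L' → L' ⊆ L → L' = L

/-- A minimal right ideal. -/
def IsMinimalRightIdeal {S : Type*} [Mul S] (R : Set S) : Prop :=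
  IsRightIdeal R ∧ ∀ R' : Set S, IsRightIdeal R' → R' ⊆ R → R' = R

/-- A semigroup is simple if it has no proper two-sided ideals. -/
def IsSimpleSg (S : Type*) [Mul S] : Prop :=
  ∀ I : Set S, IsIdeal I → I = Set.univ

/-- A semigroup is completely simple if it is simple and has minimal left and right ideals. -/
def IsCompletelySimple (S : Type*) [Mul S] : Prop :=
  IsSimpleSg S ∧ (∃ L : Set S, IsMinimalLeftIdeal L) ∧ ∃ R : Set S, IsMinimalRightIdeal R

/-- The monoid `eSe` attached to an idempotent `e` of a semigroup `S`. -/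
def LocalM {S : Type*} [Semigroup S] (e : {a : S // a * a = a}) : Type _ :=
  {x : S // (e : S) * x = x ∧ x * (e : S) = x}

instance {S : Type*} [Semigroup S] (e : {a : S // a * a = a}) : Monoid (LocalM e) where
  mul x y := ⟨x.1 * y.1, by rw [← mul_assoc, x.2.1], by rw [mul_assoc, y.2.2]⟩
  mul_assoc x y z := Subtype.ext (mul_assoc x.1 y.1 z.1)
  one := ⟨e.1, e.2, e.2⟩
  one_mul x := Subtype.ext x.2.1
  mul_one x := Subtype.ext x.2.2

/-- The maximal subgroup of a semigroup `S` at an idempotent `e`: the group of units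
of the monoid `eSe`. -/
def MaxSubgroup {S : Type*} [Semigroup S] (e : {a : S // a * a = a}) : Type _ :=
  (LocalM e)ˣ

noncomputable instance {S : Type*} [Semigroup S] (e : {a : S // a * a = a}) :
    Group (MaxSubgroup e) :=
  inferInstanceAs (Group (LocalM e)ˣ)

/-- The additive embedding `ℤN → ℤS` induced by a map `g : N → S` (used to identify `ℤM`,
`M = g(N)`, with `ℤN`). -/
noncomputable def embAlg {N S : Type*} (g : N → S) (μ : MonoidAlgebra ℤ N) :
    MonoidAlgebra ℤ S :=
  MonoidAlgebra.ofCoeff (Finsupp.mapDomain g μ.coeff)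

private lemma aux_mul_single_one {S : Type*} [Monoid S] (t : S) (μ : MonoidAlgebra ℤ S) :
    (μ * MonoidAlgebra.single t 1).coeff = Finsupp.mapDomain (· * t) μ.coeff := by
  induction μ using MonoidAlgebra.induction_linear with
  | zero => simp
  | add f g hf hg => rw [add_mul, MonoidAlgebra.coeff_add, MonoidAlgebra.coeff_add,
      Finsupp.mapDomain_add, hf, hg]
  | single s z =>
    rw [MonoidAlgebra.coeff_single, Finsupp.mapDomain_single, MonoidAlgebra.single_mul_single,
      mul_one, MonoidAlgebra.coeff_single]

private lemma aux_single_one_mul {S : Type*} [Monoid S] (t : S) (μ : MonoidAlgebra ℤ S) :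
    (MonoidAlgebra.single t 1 * μ).coeff = Finsupp.mapDomain (t * ·) μ.coeff := by
  induction μ using MonoidAlgebra.induction_linear with
  | zero => simp
  | add f g hf hg => rw [mul_add, MonoidAlgebra.coeff_add, MonoidAlgebra.coeff_add,
      Finsupp.mapDomain_add, hf, hg]
  | single s z =>
    rw [MonoidAlgebra.coeff_single, Finsupp.mapDomain_single, MonoidAlgebra.single_mul_single,
      one_mul, MonoidAlgebra.coeff_single]

private lemma aux_prodLEquiv_single {α β M : Type*} [AddCommMonoid M] [Module ℤ M]
    (a : α) (b : β) (m : M) :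
    Finsupp.finsuppProdLEquiv ℤ (Finsupp.single ((a, b) : α × β) m)
      = Finsupp.single a (Finsupp.single b m) := by
  classical
  ext x z
  simp only [Finsupp.finsuppProdLEquiv, Finsupp.curryLinearEquiv_apply, Finsupp.curry_apply]
  simp only [Finsupp.single_apply, Prod.mk.injEq, ite_and]
  split_ifs with h1 h2 <;> simp_all

private lemma aux_prodLEquiv_symm_single {α β M : Type*} [AddCommMonoid M] [Module ℤ M]
    (a : α) (b : β) (m : M) :
    (Finsupp.finsuppProdLEquiv ℤ).symm (Finsupp.single a (Finsupp.single b m))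
      = Finsupp.single ((a, b) : α × β) m := by
  rw [LinearEquiv.symm_apply_eq, aux_prodLEquiv_single]

/-- Let `S` be a monoid with a right ideal `R = N × B` (realised by an
injective semigroup embedding `ι : N × B → S` with image a right ideal), where `N` is a
monoid and `B` is a right zero semigroup.  Fix `y ∈ B` and let `M = {ι(n, y) : n ∈ N}`.
Then `M` is a subsemigroup of `S` with two-sided identity `e = ι(1, y)`, and if `A` is a
free left `ℤS`-module of rank `r` (with basis indexed by `X`, `|X| = r`), then `eA` is a
free left `ℤM`-module of rank `r·|B|`: it has a basis indexed by `X × B`, where `ℤM` is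
identified with `ℤN` acting via `embAlg (fun n => ι (n, y))`. -/
theorem stmt3 {S N B : Type*} [Monoid S] [Monoid N] [Semigroup B]
    (hB : ∀ x y : B, x * y = y)
    (ι : (N × B) →ₙ* S) (hinj : Function.Injective ι)
    (hR : ∀ p : N × B, ∀ s : S, ι p * s ∈ Set.range ι)
    (y : B)
    {A : Type*} [AddCommGroup A] [Module (MonoidAlgebra ℤ S) A]
    (X : Type*) [Nonempty X] (bA : Module.Basis X (MonoidAlgebra ℤ S) A) :
    ((∀ n : N, ι (1, y) * ι (n, y) = ι (n, y) ∧ ι (n, y) * ι (1, y) = ι (n, y)) ∧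
      ι (1, y) * ι (1, y) = ι (1, y)) ∧
    ∃ v : X × B → A,
      (∀ i : X × B, v i ∈ Set.range fun a : A =>
          (MonoidAlgebra.single (ι (1, y)) (1 : ℤ) : MonoidAlgebra ℤ S) • a) ∧
      ∀ a ∈ (Set.range fun a : A =>
          (MonoidAlgebra.single (ι (1, y)) (1 : ℤ) : MonoidAlgebra ℤ S) • a),
        ∃! c : (X × B) →₀ MonoidAlgebra ℤ N,
          a = c.sum fun i μ => embAlg (fun n : N => ι (n, y)) μ • v i := by
  
  classical
  classical
  have key : ∀ (n n' : N) (b b' : B), ι (n, b) * ι (n', b') = ι (n * n', b') := by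
    intro n n' b b'
    rw [← map_mul, Prod.mk_mul_mk, hB]
  refine ⟨⟨fun n => ⟨by rw [key, one_mul], by rw [key, mul_one]⟩, by rw [key, one_mul]⟩, ?_⟩
  set v : X × B → A := fun i =>
    (MonoidAlgebra.single (ι (1, i.2)) (1 : ℤ) : MonoidAlgebra ℤ S) • bA i.1 with hv
  refine ⟨v, ?_, ?_⟩
  · rintro ⟨x, b⟩
    refine ⟨v (x, b), ?_⟩
    simp only [hv, smul_smul]
    rw [MonoidAlgebra.single_mul_single, one_mul, key, one_mul]
  · -- the main part
    set φ : (X × B) × N → X × S := fun q => (q.1.1, ι (q.2, q.1.2)) with hφ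
    have hφinj : Function.Injective φ := by
      rintro ⟨⟨x, b⟩, n⟩ ⟨⟨x', b'⟩, n'⟩ h
      simp only [hφ, Prod.mk.injEq] at h
      obtain ⟨h1, h2⟩ := h
      have h5 := hinj h2
      rw [Prod.mk.injEq] at h5
      simp [Prod.ext_iff, h1, h5.1, h5.2]
    have hemb0 : embAlg (fun n : N => ι (n, y)) 0 = 0 := by simp [embAlg]
    have hembadd : ∀ μ μ' : MonoidAlgebra ℤ N,
        embAlg (fun n : N => ι (n, y)) (μ + μ')
          = embAlg (fun n : N => ι (n, y)) μ + embAlg (fun n : N => ι (n, y)) μ' :=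
      fun _ _ => by
        rw [embAlg, embAlg, embAlg, MonoidAlgebra.coeff_add, Finsupp.mapDomain_add,
          MonoidAlgebra.ofCoeff_add]
    have hembsingle : ∀ (n : N) (z : ℤ),
        embAlg (fun n : N => ι (n, y)) (MonoidAlgebra.single n z)
          = MonoidAlgebra.single (ι (n, y)) z :=
      fun _ _ => by
        rw [embAlg, MonoidAlgebra.coeff_single, Finsupp.mapDomain_single,
          MonoidAlgebra.ofCoeff_single]
    have hrepr : ∀ (μ : MonoidAlgebra ℤ S) (x : X),
        bA.repr (μ • bA x) = Finsupp.single x μ := by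
      intro μ x
      rw [map_smul, Module.Basis.repr_self, Finsupp.smul_single, smul_eq_mul, mul_one]
    let CN : ((X × B) →₀ MonoidAlgebra ℤ N) ≃+ ((X × B) →₀ N →₀ ℤ) :=
      Finsupp.mapRange.addEquiv MonoidAlgebra.coeffAddEquiv
    let CS : (X →₀ MonoidAlgebra ℤ S) ≃+ (X →₀ S →₀ ℤ) :=
      Finsupp.mapRange.addEquiv MonoidAlgebra.coeffAddEquiv
    have hΦ : ∀ c : (X × B) →₀ MonoidAlgebra ℤ N,
        bA.repr (c.sum fun i μ => embAlg (fun n : N => ι (n, y)) μ • v i)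
          = CS.symm (Finsupp.finsuppProdLEquiv ℤ
              (Finsupp.mapDomain φ ((Finsupp.finsuppProdLEquiv ℤ).symm (CN c)))) := by
      intro c
      induction c using Finsupp.induction_linear with
      | zero => simp
      | add f g hf hg =>
        rw [Finsupp.sum_add_index (by intro i _; rw [hemb0, zero_smul])
            (by intro i _ μ μ'; rw [hembadd, add_smul]),
          map_add, hf, hg, map_add, map_add, Finsupp.mapDomain_add, map_add, map_add]
      | single i μ =>
        rw [Finsupp.sum_single_index (by rw [hemb0, zero_smul])]
        induction μ using MonoidAlgebra.induction_linear with
        | zero => rw [hemb0, zero_smul, map_zero, Finsupp.single_zero, map_zero, map_zero,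
            Finsupp.mapDomain_zero, map_zero, map_zero]
        | add μ μ' hμ hμ' =>
          rw [hembadd, add_smul, map_add, hμ, hμ', Finsupp.single_add, map_add, map_add,
            Finsupp.mapDomain_add, map_add, map_add]
        | single n z =>
          rw [hembsingle]
          simp only [hv]
          rw [smul_smul, MonoidAlgebra.single_mul_single, key, mul_one, mul_one, hrepr]
          have hca : ∀ μ : MonoidAlgebra ℤ N, MonoidAlgebra.coeffAddEquiv μ = μ.coeff :=
            fun _ => rfl
          simp only [CN, Finsupp.mapRange.addEquiv_apply, Finsupp.mapRange_single, hca,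
            MonoidAlgebra.coeff_single]
          rw [aux_prodLEquiv_symm_single, Finsupp.mapDomain_single]
          simp only [hφ]
          rw [aux_prodLEquiv_single, AddEquiv.eq_symm_apply]
          simp only [CS, Finsupp.mapRange.addEquiv_apply, Finsupp.mapRange_single]
          rfl
    have hΦinj : ∀ c c' : (X × B) →₀ MonoidAlgebra ℤ N,
        (c.sum fun i μ => embAlg (fun n : N => ι (n, y)) μ • v i)
          = (c'.sum fun i μ => embAlg (fun n : N => ι (n, y)) μ • v i) → c = c' := by
      intro c c' h
      have h1 := congrArg bA.repr h
      rw [hΦ, hΦ] at h1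
      exact CN.injective ((Finsupp.finsuppProdLEquiv ℤ).symm.injective
        (Finsupp.mapDomain_injective hφinj ((Finsupp.finsuppProdLEquiv ℤ).injective
          (CS.symm.injective h1))))
    rintro a ⟨a₀, rfl⟩
    simp only []
    haveI : Nonempty ((X × B) × N) := ⟨⟨(Classical.arbitrary X, y), 1⟩⟩
    set ρ : X × S → (X × B) × N := Function.invFun φ with hρ
    set w : X × S →₀ ℤ := (Finsupp.finsuppProdLEquiv ℤ).symm
      (CS (bA.repr ((MonoidAlgebra.single (ι (1, y)) (1 : ℤ) : MonoidAlgebra ℤ S) • a₀))) with hw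
    have hwsupp : ∀ q ∈ w.support, q ∈ Set.range φ := by
      rintro ⟨x, s⟩ hq
      have hval : w (x, s) ≠ 0 := Finsupp.mem_support_iff.mp hq
      rw [hw] at hval
      have hx : (bA.repr ((MonoidAlgebra.single (ι (1, y)) (1 : ℤ) : MonoidAlgebra ℤ S) • a₀)
          x).coeff = Finsupp.mapDomain (fun s' => ι (1, y) * s') (bA.repr a₀ x).coeff := by
        rw [map_smul, Finsupp.smul_apply, smul_eq_mul, aux_single_one_mul]
      have hval2 : (bA.repr ((MonoidAlgebra.single (ι (1, y)) (1 : ℤ) : MonoidAlgebra ℤ S) • a₀)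
          x).coeff s ≠ 0 := hval
      rw [hx] at hval2
      have hmem : s ∈ (Finsupp.mapDomain (fun s' => ι (1, y) * s') (bA.repr a₀ x).coeff).support :=
        Finsupp.mem_support_iff.mpr hval2
      obtain ⟨s', _, rfl⟩ := Finset.mem_image.mp (Finsupp.mapDomain_support hmem)
      obtain ⟨p, hp⟩ := hR (1, y) s'
      exact ⟨((x, p.2), p.1), by simp [hφ, hp]⟩
    refine ⟨CN.symm (Finsupp.finsuppProdLEquiv ℤ (Finsupp.mapDomain ρ w)), ?_, ?_⟩
    · apply bA.repr.injective
      rw [hΦ, AddEquiv.apply_symm_apply, LinearEquiv.symm_apply_apply, ← Finsupp.mapDomain_comp]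
      have hid : Finsupp.mapDomain (φ ∘ ρ) w = w := by
        rw [Finsupp.mapDomain_congr (g := id) (fun q hq => by
          obtain ⟨q', rfl⟩ := hwsupp q hq
          simp only [Function.comp_apply, hρ, id_eq]
          rw [Function.leftInverse_invFun hφinj q']), Finsupp.mapDomain_id]
      rw [hid, hw, LinearEquiv.apply_symm_apply, AddEquiv.symm_apply_apply]
    · intro c' hc'
      refine hΦinj c' _ ?_
      rw [← hc']
      apply bA.repr.injective
      rw [hΦ, AddEquiv.apply_symm_apply, LinearEquiv.symm_apply_apply, ← Finsupp.mapDomain_comp]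
      have hid : Finsupp.mapDomain (φ ∘ ρ) w = w := by
        rw [Finsupp.mapDomain_congr (g := id) (fun q hq => by
          obtain ⟨q', rfl⟩ := hwsupp q hq
          simp only [Function.comp_apply, hρ, id_eq]
          rw [Function.leftInverse_invFun hφinj q']), Finsupp.mapDomain_id]
      rw [hid, hw, LinearEquiv.apply_symm_apply, AddEquiv.symm_apply_apply]
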